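/- arXiv:math/0412055 — 8 statements merged into one kernel-verified Lean document; each statement's English description precedes it below -/
import Mathlib

section
/- Let f_1, ..., f_n be monomials in K[x_1,...,x_m] such that gcd(f_i, f_j) divides f_k for all i < j < k. Then for each i, the monomials f_1/gcd(f_1,f_i), ..., f_{i-1}/gcd(f_{i-1},f_i) are pairwise coprime, and hence form a regular sequence. -/
/-!
Since `gcd(f_j, f_l)` divides `f_i`, in every variable one of `f_j`, `f_l` has exponent at most
that of `f_i`; that one loses the variable entirely after division by its gcd with `f_i`. So the
quotients involve disjoint sets of variables, and monomials in disjoint sets of variables are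
coprime because distinct variables are non-associated primes.
-/

open MvPolynomial

namespace MvPolynomial

variable {σ R : Type*} [CommRing R] [IsDomain R] [DecompositionMonoid (MvPolynomial σ R)]

theorem isRelPrime_monomial_one_of_disjoint {d e : σ →₀ ℕ} (h : Disjoint d.support e.support) :
    IsRelPrime (monomial d (1 : R)) (monomial e 1) := by
  rw [← prod_X_pow_eq_monomial]
  refine IsRelPrime.prod_left fun x hx ↦ IsRelPrime.pow_left ?_
  rw [(X_prime (R := R) (i := x)).irreducible.isRelPrime_iff_not_dvd, X_dvd_monomial]
  simpa using Finset.disjoint_left.mp h hx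

end MvPolynomial

theorem Finsupp.disjoint_support_tsub_inf {σ : Type*} {c d e : σ →₀ ℕ} (h : d ⊓ e ≤ c) :
    Disjoint (d - d ⊓ c).support (e - e ⊓ c).support := by
  refine Finset.disjoint_left.mpr fun x hd he ↦ ?_
  simp only [Finsupp.mem_support_iff, Finsupp.tsub_apply, Finsupp.inf_apply] at hd he
  have := h x
  simp only [Finsupp.inf_apply] at this
  omega

/-- If `f_1,…,f_n` are monomials in `K[x_1,…,x_m]` with `gcd(f_i,f_j) ∣ f_k`
for all `i < j < k`, then for each `i` the monomials
`f_j/gcd(f_j,f_i)` (`j < i`) are pairwise coprime: any common divisor of two of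
them is a unit. -/
theorem stmt_2 {K : Type*} [Field K] {m n : ℕ} (a : Fin n → (Fin m →₀ ℕ))
    (h : ∀ i j k : Fin n, i < j → j < k →
      (monomial (a i ⊓ a j) (1 : K)) ∣ monomial (a k) 1) :
    ∀ i j l : Fin n, j < i → l < i → j ≠ l →
      ∀ p : MvPolynomial (Fin m) K,
        p ∣ monomial (a j - a j ⊓ a i) 1 → p ∣ monomial (a l - a l ⊓ a i) 1 →
          IsUnit p := by
  intro i j l hji hli hjl
  have hinf : a j ⊓ a l ≤ a i := by
    rcases hjl.lt_or_gt with hjl | hlj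
    · exact monomial_one_dvd_monomial_one.mp (h j l i hjl hli)
    · exact inf_comm (a j) (a l) ▸ monomial_one_dvd_monomial_one.mp (h l j i hlj hji)
  exact isRelPrime_monomial_one_of_disjoint (Finsupp.disjoint_support_tsub_inf hinf)
end

section
/- Let f_1, ..., f_n be monomials in K[x_1,...,x_m] such that gcd(f_i, f_j) divides f_k for all i < j < k. Then the colon ideals I_i = (f_1,...,f_{i-1}) : f_i form an increasing chain: I_2 ⊆ I_3 ⊆ ... ⊆ I_n. -/
open MvPolynomial

/-- If `f_1,…,f_n` are monomials in `K[x_1,…,x_m]` with `gcd(f_i,f_j) ∣ f_k`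
for all `i < j < k`, then the colon ideals
`I_i = (f_1,…,f_{i-1}) : f_i` form an increasing chain. -/
theorem stmt_3 {K : Type*} [Field K] {m n : ℕ} (a : Fin n → (Fin m →₀ ℕ))
    (f : Fin n → MvPolynomial (Fin m) K) (hf : ∀ i, f i = monomial (a i) 1)
    (h : ∀ i j k : Fin n, i < j → j < k →
      (monomial (a i ⊓ a j) (1 : K)) ∣ monomial (a k) 1)
    (I : Fin n → Ideal (MvPolynomial (Fin m) K))
    (hI : ∀ i, I i = (Ideal.span (f '' {j | j < i})).colon (Ideal.span {f i})) :
    ∀ i j : Fin n, i ≤ j → I i ≤ I j := by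
  have himg : ∀ i : Fin n, f '' {j | j < i} =
      (fun s => monomial s (1 : K)) '' (a '' {j | j < i}) := by
    intro i
    rw [Set.image_image]
    exact Set.image_congr fun j _ => hf j
  intro i j hij r hr
  rcases eq_or_lt_of_le hij with rfl | hij
  · exact hr
  rw [hI, Ideal.mem_colon_span_singleton, hf, himg, mem_ideal_span_monomial_image] at hr ⊢
  intro d hd
  -- analyze support of r * monomial (a j) 1
  have hcd : coeff d (r * monomial (a j) 1) ≠ 0 := mem_support_iff.mp hd
  rw [coeff_mul_monomial'] at hcd
  by_cases hle : a j ≤ d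
  swap
  · simp [hle] at hcd
  rw [if_pos hle, mul_one] at hcd
  set b := d - a j with hb
  have hbsup : b + a i ∈ (r * monomial (a i) 1).support := by
    rw [mem_support_iff, coeff_mul_monomial', if_pos le_add_self, mul_one,
      add_tsub_cancel_right]
    exact hcd
  obtain ⟨s, ⟨l, hl, rfl⟩, hsle⟩ := hr _ hbsup
  refine ⟨a l, ⟨l, lt_trans hl hij, rfl⟩, ?_⟩
  -- a l ⊓ a i ≤ a j
  have hgcd : a l ⊓ a i ≤ a j := by
    have := (monomial_dvd_monomial.mp (h l i j hl hij)).1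
    exact this.resolve_left one_ne_zero
  have hd' : d = b + a j := by
    rw [hb, tsub_add_cancel_of_le hle]
  rw [hd']
  intro x
  have h1 : a l x ≤ b x + a i x := hsle x
  have h2 : min (a l x) (a i x) ≤ a j x := by
    simpa [Finsupp.inf_apply] using hgcd x
  simp only [Finsupp.add_apply]
  omega
end

section
/- A minimal monomial sequence f_1, ..., f_n in a polynomial ring over a field is a d-sequence if and only if gcd(f_i,f_j) divides f_k for all i < j < k and gcd(f_i, f_j) = gcd(f_i, f_j^2) for all i < j. -/
/-!
Write `f_i = x ^ a i`. For an ideal `I` generated by monomials, `p ∈ I : x ^ b` iff for every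
exponent `c` of `p`, `c + b` dominates the exponent of a generator. So each colon equality of a
d-sequence says: if `x ^ c f_i f_k ∈ (f_j)_{j < i}`, then already `x ^ c f_k ∈ (f_j)_{j < i}`.

Given the gcd conditions, the generator `f_j` witnessing the first membership also witnesses the
second: in a variable where `f_k` has smaller exponent than `f_j`, the exponent of `f_k` is `0`,
and then so is that of `f_i`, as `gcd(f_j, f_i) ∣ f_k`.

For the converse, test the colon equality for `(j, k)` on `x ^ c` with
`c = a i - a i ⊓ (a j + a k)`, the least exponent with `f_i ∣ x ^ c f_j f_k`. By well-founded
induction on `k` the gcd conditions already hold for smaller `k`; with minimality they rule out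
every witness other than `f_i`, and `f_i` gives, in each variable, `a i ≤ a k` or `a j = 0`.
For `j < k` this is `gcd(f_i, f_j) ∣ f_k`, for `j = k` it is `gcd(f_i, f_k) = gcd(f_i, f_k²)`.
-/

open MvPolynomial

/-- A sequence `f_0,…,f_{n-1}` (0-based) is a d-sequence if it minimally
generates its ideal (for monomials: no `f_i` divides `f_j` for `i ≠ j`) and
`(f_0,…,f_{i-1}) : (f_i f_k) = (f_0,…,f_{i-1}) : f_k` for all `i ≤ k`. -/
def IsDSequence {R : Type*} [CommRing R] {n : ℕ} (f : Fin n → R) : Prop :=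
  (∀ i j : Fin n, i ≠ j → ¬f i ∣ f j) ∧
    ∀ i k : Fin n, i ≤ k →
      (Ideal.span (f '' {j | j < i})).colon (Ideal.span {f i * f k}) =
        (Ideal.span (f '' {j | j < i})).colon (Ideal.span {f k})

section MonomialIdeal

variable {σ R : Type*}

lemma MvPolynomial.support_mul_monomial_one [CommSemiring R] (p : MvPolynomial σ R)
    (b : σ →₀ ℕ) : (p * monomial b (1 : R)).support = p.support.map (addRightEmbedding b) :=
  AddMonoidAlgebra.support_coeff_mul_single p _ (by simp) _

lemma MvPolynomial.mem_colon_span_monomial_iff [CommSemiring R] (S : Set (σ →₀ ℕ))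
    (b : σ →₀ ℕ) (p : MvPolynomial σ R) :
    p ∈ (Ideal.span ((monomial · (1 : R)) '' S)).colon (Ideal.span {monomial b (1 : R)}) ↔
      ∀ c ∈ p.support, ∃ s ∈ S, s ≤ c + b := by
  simp [mem_ideal_span_monomial_image, support_mul_monomial_one]

lemma MvPolynomial.colon_span_monomial_add_eq_iff [CommRing R] [Nontrivial R]
    (S : Set (σ →₀ ℕ)) (b d : σ →₀ ℕ) :
    (Ideal.span ((monomial · (1 : R)) '' S)).colon (Ideal.span {monomial (b + d) (1 : R)}) =
        (Ideal.span ((monomial · (1 : R)) '' S)).colon (Ideal.span {monomial d (1 : R)}) ↔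
      ∀ c, (∃ s ∈ S, s ≤ c + (b + d)) → ∃ s ∈ S, s ≤ c + d := by
  simp only [SetLike.ext_iff, mem_colon_span_monomial_iff]
  refine ⟨fun h c hc => ?_, fun h p => ⟨fun hp c hc => h c (hp c hc), fun hp c hc => ?_⟩⟩
  · classical
    have hc' := h (monomial c 1)
    simp only [support_monomial, if_neg one_ne_zero, Finset.mem_singleton, forall_eq] at hc'
    exact hc'.1 hc
  · obtain ⟨s, hs, hle⟩ := hp c hc
    exact ⟨s, hs, hle.trans (by simp [← add_assoc])⟩

end MonomialIdeal

namespace Finsupp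

variable {σ : Type*}

lemma inf_eq_inf_add_self_iff {x y : σ →₀ ℕ} :
    x ⊓ y = x ⊓ (y + y) ↔ ∀ t, y t < x t → y t = 0 := by
  simp only [Finsupp.ext_iff, inf_apply, add_apply]
  exact forall_congr' fun t => by omega

end Finsupp

section Exponents

variable {ι σ : Type*} [LinearOrder ι]

/-- The colon equalities of `IsDSequence` for the monomials `x ^ a i`, read off exponents. -/
def MonomialColonCondition (a : ι → σ →₀ ℕ) : Prop :=
  ∀ i k, i ≤ k → ∀ c, (∃ l < i, a l ≤ c + (a i + a k)) → ∃ l < i, a l ≤ c + a k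

variable {a : ι → σ →₀ ℕ}

/- `hj` holds trivially for `j = k`, and for `j < k` it follows from
`a i ⊓ a j = a i ⊓ (a j + a j)`. -/
lemma le_or_eq_zero_of_colon {i j k : ι}
    (hcol : ∀ c, (∃ l < j, a l ≤ c + (a j + a k)) → ∃ l < j, a l ≤ c + a k)
    (hmin : ∀ l < j, ¬a l ≤ a k) (hij : i < j)
    (hinf : ∀ l < j, l ≠ i → a i ⊓ a l ≤ a j)
    (hj : ∀ s, a j s < a i s → a j s ≤ a k s) (t : σ) :
    a i t ≤ a k t ∨ a j t = 0 := by
  obtain ⟨l, hlj, hl⟩ := hcol (a i - a i ⊓ (a j + a k))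
    ⟨i, hij, fun s => by
      simp only [Finsupp.tsub_apply, Finsupp.add_apply, Finsupp.inf_apply]
      omega⟩
  obtain rfl | hli := eq_or_ne l i
  · have := hl t
    simp only [Finsupp.tsub_apply, Finsupp.add_apply, Finsupp.inf_apply] at this
    omega
  · obtain ⟨s, hs⟩ : ∃ s, a k s < a l s := by simpa [Finsupp.le_def] using hmin l hlj
    have hl_s := hl s
    have hinf_s := hinf l hlj hli s
    have hj_s := hj s
    simp only [Finsupp.tsub_apply, Finsupp.add_apply, Finsupp.inf_apply] at hl_s hinf_s
    omega

theorem monomialColonCondition_of_inf_le_of_inf_eq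
    (hinf : ∀ i j k, i < j → j < k → a i ⊓ a j ≤ a k)
    (hsq : ∀ i j, i < j → a i ⊓ a j = a i ⊓ (a j + a j)) : MonomialColonCondition a := by
  rintro i k hik c ⟨j, hji, hj⟩
  refine ⟨j, hji, fun t => ?_⟩
  have h1 := hj t
  have hi := Finsupp.inf_eq_inf_add_self_iff.1 (hsq j i hji) t
  have hk := Finsupp.inf_eq_inf_add_self_iff.1 (hsq j k (hji.trans_le hik)) t
  simp only [Finsupp.add_apply] at h1 ⊢
  rcases hik.eq_or_lt with rfl | hik
  · omega
  · have := hinf j i k hji hik t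
    simp only [Finsupp.inf_apply] at this
    omega

variable [WellFoundedLT ι]

theorem inf_le_and_inf_eq_of_monomialColonCondition (hmin : ∀ i j, i ≠ j → ¬a i ≤ a j)
    (hcol : MonomialColonCondition a) :
    (∀ i j k, i < j → j < k → a i ⊓ a j ≤ a k) ∧
      ∀ i j, i < j → a i ⊓ a j = a i ⊓ (a j + a j) := by
  suffices key : ∀ k, (∀ i j, i < j → j < k → a i ⊓ a j ≤ a k) ∧
      ∀ i < k, a i ⊓ a k = a i ⊓ (a k + a k) from
    ⟨fun i j k hij hjk => (key k).1 i j hij hjk, fun i j hij => (key j).2 i hij⟩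
  intro k
  induction k using WellFoundedLT.induction with
  | _ k ih =>
  have hmin' {j} (hjk : j ≤ k) : ∀ l < j, ¬a l ≤ a k :=
    fun l hlj => hmin l k (hlj.trans_le hjk).ne
  have hinf : ∀ i j, i < j → j < k → a i ⊓ a j ≤ a k := by
    intro i j hij hjk t
    have hinf_j : ∀ l < j, l ≠ i → a i ⊓ a l ≤ a j := by
      intro l hlj hli
      rcases hli.lt_or_gt with hli | hil
      · exact inf_comm (a i) (a l) ▸ (ih j hjk).1 l i hli hij
      · exact (ih j hjk).1 i l hil hlj
    have hj : ∀ s, a j s < a i s → a j s ≤ a k s := fun s hs =>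
      (Finsupp.inf_eq_inf_add_self_iff.1 ((ih j hjk).2 i hij) s hs).trans_le (Nat.zero_le _)
    have := le_or_eq_zero_of_colon (hcol j k hjk.le) (hmin' hjk.le) hij hinf_j hj t
    simp only [Finsupp.inf_apply]
    omega
  refine ⟨hinf, fun i hik => Finsupp.inf_eq_inf_add_self_iff.2 fun t ht => ?_⟩
  have hinf_k : ∀ l < k, l ≠ i → a i ⊓ a l ≤ a k := by
    intro l hlk hli
    rcases hli.lt_or_gt with hli | hil
    · exact inf_comm (a i) (a l) ▸ hinf l i hli hik
    · exact hinf i l hil hlk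
  have := le_or_eq_zero_of_colon (hcol k k le_rfl) (hmin' le_rfl) hik hinf_k
    (fun _ _ => le_rfl) t
  omega

end Exponents

theorem isDSequence_monomial_iff {σ R : Type*} [CommRing R] [Nontrivial R] {n : ℕ}
    (a : Fin n → σ →₀ ℕ) :
    IsDSequence (fun i => monomial (a i) (1 : R)) ↔
      (∀ i j, i ≠ j → ¬a i ≤ a j) ∧ MonomialColonCondition a := by
  have himage (i : Fin n) : (fun j => monomial (a j) (1 : R)) '' {j | j < i} =
      (monomial · 1) '' (a '' {j | j < i}) :=
    (Set.image_image (monomial · (1 : R)) a _).symm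
  simp only [IsDSequence, MonomialColonCondition, monomial_one_dvd_monomial_one, monomial_mul,
    one_mul, himage, colon_span_monomial_add_eq_iff, Set.exists_mem_image, Set.mem_ofPred_eq]

/-- A minimal monomial sequence `f_1,…,f_n` in `K[x_1,…,x_m]` is a d-sequence
iff `gcd(f_i,f_j) ∣ f_k` for all `i < j < k` and `gcd(f_i,f_j) = gcd(f_i,f_j²)`
for all `i < j`. -/
theorem stmt_5 {K : Type*} [Field K] {m n : ℕ} (a : Fin n → (Fin m →₀ ℕ))
    (f : Fin n → MvPolynomial (Fin m) K) (hf : ∀ i, f i = monomial (a i) 1)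
    (hmin : ∀ i j : Fin n, i ≠ j → ¬f i ∣ f j) :
    IsDSequence f ↔
      (∀ i j k : Fin n, i < j → j < k →
          (monomial (a i ⊓ a j) (1 : K)) ∣ monomial (a k) 1) ∧
        ∀ i j : Fin n, i < j → a i ⊓ a j = a i ⊓ (a j + a j) := by
  obtain rfl : f = fun i => monomial (a i) 1 := funext hf
  simp only [monomial_one_dvd_monomial_one] at hmin ⊢
  rw [isDSequence_monomial_iff]
  exact ⟨fun ⟨_, hcol⟩ => inf_le_and_inf_eq_of_monomialColonCondition hmin hcol,
    fun ⟨hinf, hsq⟩ => ⟨hmin, monomialColonCondition_of_inf_le_of_inf_eq hinf hsq⟩⟩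
end

section
/- If a minimal monomial sequence f_1, ..., f_n is a d-sequence, then every subsequence of it is also a d-sequence. -/
/-!
For monomials `f_i = x ^ a_i`, colons of monomial ideals by monomials are again monomial ideals,
so each colon equality of a d-sequence becomes a statement about exponent vectors. Testing it on
the monomial `f_p / gcd(f_p, f_q f_r)` for `p < q ≤ r`, minimality and induction on `q` give the
gcd conditions; conversely, under the gcd conditions a generator `f_j` (`j < i`) dividing
`e f_i f_k` already divides `e f_k`. The gcd conditions only involve the relative order of the
indices, so they pass to subsequences, and so does minimality.
-/

open MvPolynomial

namespace MvPolynomial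

variable {σ R : Type*} [CommRing R]

theorem support_mul_monomial_one_s6 (p : MvPolynomial σ R) (s : σ →₀ ℕ) :
    (p * monomial s 1).support = p.support.map (addRightEmbedding s) :=
  AddMonoidAlgebra.support_coeff_mul_single p (r := 1) (by simp) s

theorem mem_colon_span_monomial_image {S : Set (σ →₀ ℕ)} {s : σ →₀ ℕ}
    {r : MvPolynomial σ R} :
    r ∈ (Ideal.span ((fun d => monomial d (1 : R)) '' S)).colon
        (Ideal.span {monomial s (1 : R)}) ↔
      ∀ e ∈ r.support, ∃ b ∈ S, b ≤ e + s := by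
  rw [Ideal.mem_colon_span_singleton, mem_ideal_span_monomial_image, support_mul_monomial_one_s6,
    Finset.forall_mem_map]
  rfl

theorem colon_span_monomial_image_eq_iff [Nontrivial R] {S : Set (σ →₀ ℕ)} {u v : σ →₀ ℕ} :
    (Ideal.span ((fun d => monomial d (1 : R)) '' S)).colon
          (Ideal.span {monomial u (1 : R)}) =
        (Ideal.span ((fun d => monomial d (1 : R)) '' S)).colon
          (Ideal.span {monomial v (1 : R)}) ↔
      ∀ e, (∃ b ∈ S, b ≤ e + u) ↔ ∃ b ∈ S, b ≤ e + v := by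
  refine ⟨fun h e => ?_, fun h => Ideal.ext fun r => ?_⟩
  · have hmem (s : σ →₀ ℕ) :
        monomial e (1 : R) ∈ (Ideal.span ((fun d => monomial d (1 : R)) '' S)).colon
          (Ideal.span {monomial s (1 : R)}) ↔ ∃ b ∈ S, b ≤ e + s := by
      classical
      rw [mem_colon_span_monomial_image, support_monomial, if_neg one_ne_zero]
      simp
    rw [← hmem, ← hmem, h]
  · simp only [mem_colon_span_monomial_image, h]

end MvPolynomial

section Exponents

variable {ι σ : Type*} [LinearOrder ι] (a : ι → σ →₀ ℕ)

/-- Exponent form of `(f_j : j < i) : f_i f_k ⊆ (f_j : j < i) : f_k`; the reverse inclusion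
always holds. -/
def ColonCondition : Prop :=
  ∀ i k, i ≤ k → ∀ e, (∃ j < i, a j ≤ e + (a i + a k)) → ∃ j < i, a j ≤ e + a k

/-- `⊓` of exponent vectors is the gcd of monomials, and `2 • a j` is the exponent of
`f_j ^ 2`. -/
def GcdConditions : Prop :=
  (∀ i j k, i < j → j < k → a i ⊓ a j ≤ a k) ∧ ∀ i j, i < j → a i ⊓ a j = a i ⊓ 2 • a j

variable {a}

namespace ColonCondition

variable (hcol : ColonCondition a) (hmin : Pairwise fun i j => ¬a i ≤ a j)
include hmin hcol

theorem le_or_eq_zero {p q r : ι} (hpq : p < q) (hqr : q ≤ r)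
    (hinf : ∀ l < q, l ≠ p → a l ⊓ a p ≤ a r) (t : σ) : a p t ≤ a r t ∨ a q t = 0 := by
  obtain ⟨l, hlq, hl⟩ := hcol q r hqr (a p - (a q + a r)) ⟨p, hpq, le_tsub_add⟩
  obtain rfl | hlp := eq_or_ne l p
  · have := hl t
    simp only [Finsupp.coe_add, Finsupp.coe_tsub, Pi.add_apply, Pi.sub_apply] at this
    omega
  · refine absurd (fun s => ?_) (hmin (hlq.trans_le hqr).ne)
    have h₁ := hl s
    have h₂ := hinf l hlq hlp s
    simp only [Finsupp.coe_add, Finsupp.coe_tsub, Pi.add_apply, Pi.sub_apply,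
      Finsupp.inf_apply] at h₁ h₂
    omega

variable [WellFoundedLT ι]

theorem inf_le {p q r : ι} (hpq : p < q) (hqr : q < r) : a p ⊓ a q ≤ a r := by
  induction q using WellFoundedLT.induction generalizing p with
  | ind q ih =>
    intro t
    have hinf (l) (hlq : l < q) (hlp : l ≠ p) : a l ⊓ a p ≤ a r := by
      obtain hl | hl := hlp.lt_or_gt
      · exact ih p hpq hl (hpq.trans hqr)
      · exact inf_comm (a l) (a p) ▸ ih l hlq hl (hlq.trans hqr)
    have := hcol.le_or_eq_zero hmin hpq hqr.le hinf t
    simp only [Finsupp.inf_apply]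
    omega

theorem inf_le_of_ne {l p r : ι} (hlr : l < r) (hpr : p < r) (hlp : l ≠ p) :
    a l ⊓ a p ≤ a r := by
  obtain hl | hl := hlp.lt_or_gt
  · exact hcol.inf_le hmin hl hpr
  · exact inf_comm (a l) (a p) ▸ hcol.inf_le hmin hl hlr

theorem gcdConditions : GcdConditions a := by
  refine ⟨fun p q r => hcol.inf_le hmin, fun p q hpq => Finsupp.ext fun t => ?_⟩
  have := hcol.le_or_eq_zero hmin hpq le_rfl
    (fun l hlq hlp => hcol.inf_le_of_ne hmin hlq hpq hlp) t
  simp only [Finsupp.inf_apply, Finsupp.smul_apply, smul_eq_mul]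
  omega

end ColonCondition

theorem GcdConditions.colonCondition (h : GcdConditions a) : ColonCondition a := by
  intro i k hik e ⟨j, hji, hj⟩
  refine ⟨j, hji, fun t => ?_⟩
  have hjt := hj t
  have hjk := congrArg (· t) (h.2 j k (hji.trans_le hik))
  simp only [Finsupp.coe_add, Pi.add_apply, Finsupp.inf_apply, Finsupp.smul_apply,
    smul_eq_mul] at hjt hjk ⊢
  obtain rfl | hik := hik.eq_or_lt
  · omega
  · have := h.1 j i k hji hik t
    simp only [Finsupp.inf_apply] at this
    omega

theorem GcdConditions.comp_strictMono {κ : Type*} [LinearOrder κ] (h : GcdConditions a)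
    {g : κ → ι} (hg : StrictMono g) : GcdConditions (a ∘ g) :=
  ⟨fun _ _ _ hij hjk => h.1 _ _ _ (hg hij) (hg hjk), fun _ _ hij => h.2 _ _ (hg hij)⟩

end Exponents

section DSequence

variable {R σ : Type*} [CommRing R] [Nontrivial R] {n : ℕ} {a : Fin n → σ →₀ ℕ}
  {f : Fin n → MvPolynomial σ R}

theorem isDSequence_monomial_iff_s6 (hf : ∀ i, f i = monomial (a i) 1) :
    IsDSequence f ↔ (Pairwise fun i j => ¬a i ≤ a j) ∧ ColonCondition a := by
  have hdvd (i j : Fin n) : f i ∣ f j ↔ a i ≤ a j := by simp [hf, monomial_dvd_monomial]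
  have hgens (i : Fin n) :
      f '' {j | j < i} = (fun d => monomial d (1 : R)) '' (a '' {j | j < i}) := by
    rw [Set.image_image]
    exact Set.image_congr fun j _ => hf j
  have hcolon (i k : Fin n) :
      (Ideal.span (f '' {j | j < i})).colon (Ideal.span {f i * f k}) =
          (Ideal.span (f '' {j | j < i})).colon (Ideal.span {f k}) ↔
        ∀ e, (∃ j < i, a j ≤ e + (a i + a k)) → ∃ j < i, a j ≤ e + a k := by
    rw [hgens, hf i, hf k, monomial_mul, mul_one, colon_span_monomial_image_eq_iff]
    simp only [Set.exists_mem_image, Set.mem_ofPred_eq]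
    exact forall_congr' fun e => ⟨Iff.mp, fun h => ⟨h, fun ⟨j, hj, hle⟩ =>
      ⟨j, hj, hle.trans (add_le_add_right le_add_self e)⟩⟩⟩
  simp only [IsDSequence, hdvd]
  exact and_congr Iff.rfl (forall₂_congr fun i k => forall_congr' fun _ => hcolon i k)

theorem isDSequence_monomial_iff_gcdConditions (hf : ∀ i, f i = monomial (a i) 1) :
    IsDSequence f ↔ (Pairwise fun i j => ¬a i ≤ a j) ∧ GcdConditions a := by
  rw [isDSequence_monomial_iff_s6 hf]
  exact ⟨fun ⟨hmin, hcol⟩ => ⟨hmin, hcol.gcdConditions hmin⟩,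
    fun ⟨hmin, hgcd⟩ => ⟨hmin, hgcd.colonCondition⟩⟩

end DSequence

/-- If a (minimal) monomial sequence `f_1,…,f_n` is a d-sequence, then every
subsequence (selected by a strictly monotone map) is also a d-sequence. -/
theorem stmt_6 {K : Type*} [Field K] {m n p : ℕ} (a : Fin n → (Fin m →₀ ℕ))
    (f : Fin n → MvPolynomial (Fin m) K) (hf : ∀ i, f i = monomial (a i) 1)
    (hd : IsDSequence f) (g : Fin p → Fin n) (hg : StrictMono g) :
    IsDSequence (f ∘ g) := by
  obtain ⟨hmin, hgcd⟩ := (isDSequence_monomial_iff_gcdConditions hf).mp hd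
  exact (isDSequence_monomial_iff_gcdConditions fun i => hf (g i)).mpr
    ⟨hmin.comp_of_injective hg.injective, hgcd.comp_strictMono hg⟩
end

section
/- A minimal monomial sequence f_1, ..., f_n in a polynomial ring over a field is a proper sequence if and only if gcd(f_i, f_j) divides f_k for all 1 ≤ i < j < k ≤ n. -/
open MvPolynomial

/-!
Write `f_i = X^(a i)`. Multiplied by `f_r`, the pair syzygy `X^(d - a u) e_u - X^(d - a v) e_v`
is a monomial multiple of the Koszul boundary `f_v e_u - f_u e_v` whenever `gcd(f_u, f_v) ∣ f_r`,
and pair syzygies span all syzygies of monomials: this gives the gcd condition ⇒ properness.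

Conversely take a violation `i < j < k` with `k` minimal, then `j` minimal, and put
`d = a k + (a i ⊔ a j)`. In multidegree `d` the boundaries of `f_0, …, f_{k-1}` are spanned by the
differences `X^(d - a u) e_u - X^(d - a v) e_v` along the edges `a u + a v ≤ d` of a graph on
`{0, …, k-1}`, and minimality (together with the antichain condition) separates `i` from `j` in
this graph. Taking the coefficient of `X^d` in `∑_{q ∈ s} x_q f_q`, for a union `s` of components
containing `i` but not `j`, kills every boundary but takes the value `1` on `f_k` times the
Koszul cycle of `f_i, f_j`.
-/

/-- `f_0,…,f_{n-1}` (0-based) is a proper sequence if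
`f_r · H_1(f_0,…,f_{r-1}; R) = 0` for every `r`: every Koszul 1-cycle `v`
supported on the first `r` elements, multiplied by `f_r`, lies in the
submodule generated by the Koszul boundaries `f_j e_i - f_i e_j`
(`i < j < r`). -/
def IsProperSequence {R : Type*} [CommRing R] {n : ℕ} (f : Fin n → R) : Prop :=
  ∀ r : Fin n, ∀ v : Fin n → R,
    (∀ j, r ≤ j → v j = 0) → (∑ j, v j * f j = 0) →
      (fun j => f r * v j) ∈ Submodule.span R
        {w : Fin n → R | ∃ i j : Fin n, i < j ∧ j < r ∧
          w = Pi.single i (f j) - Pi.single j (f i)}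

def koszulBoundaries {A : Type*} [CommRing A] {n : ℕ} (f : Fin n → A) (r : Fin n) :
    Submodule A (Fin n → A) :=
  Submodule.span A {w | ∃ i j : Fin n, i < j ∧ j < r ∧ w = Pi.single i (f j) - Pi.single j (f i)}

theorem isProperSequence_iff {A : Type*} [CommRing A] {n : ℕ} (f : Fin n → A) :
    IsProperSequence f ↔ ∀ r : Fin n, ∀ v : Fin n → A, (∀ j, r ≤ j → v j = 0) →
      ∑ j, v j * f j = 0 → f r • v ∈ koszulBoundaries f r :=
  Iff.rfl

section Combinatorics

variable {σ : Type*} {n : ℕ}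

structure MinimalGcdViolation (a : Fin n → σ →₀ ℕ) (i j k : Fin n) : Prop where
  lt_ij : i < j
  lt_jk : j < k
  not_inf_le : ¬a i ⊓ a j ≤ a k
  inf_le_below_k : ∀ u v w, u < v → v < w → w < k → a u ⊓ a v ≤ a w
  inf_le_of_lt_j : ∀ u v, u < v → v < j → a u ⊓ a v ≤ a k

theorem exists_minimalGcdViolation {a : Fin n → σ →₀ ℕ}
    (h : ¬∀ i j k : Fin n, i < j → j < k → a i ⊓ a j ≤ a k) :
    ∃ i j k, MinimalGcdViolation a i j k := by
  push Not at h
  obtain ⟨i₁, j₁, k₁, hij₁, hjk₁, hk₁⟩ := h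
  obtain ⟨k, ⟨i₂, j₂, hij₂, hjk₂, hk₂⟩, hkmin⟩ := wellFounded_lt.has_min
    {k | ∃ i j, i < j ∧ j < k ∧ ¬a i ⊓ a j ≤ a k} ⟨k₁, i₁, j₁, hij₁, hjk₁, hk₁⟩
  obtain ⟨j, ⟨i, hij, hjk, hviol⟩, hjmin⟩ := wellFounded_lt.has_min
    {j | ∃ i, i < j ∧ j < k ∧ ¬a i ⊓ a j ≤ a k} ⟨j₂, i₂, hij₂, hjk₂, hk₂⟩
  exact ⟨i, j, k, hij, hjk, hviol,
    fun u v w huv hvw hwk => by_contra fun h => hkmin w ⟨u, v, huv, hvw, h⟩ hwk,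
    fun u v huv hvj => by_contra fun h => hjmin v ⟨u, huv, hvj.trans hjk, h⟩ hvj⟩

namespace MinimalGcdViolation

variable {a : Fin n → σ →₀ ℕ} {i j k : Fin n}

theorem inf_le_inf_of_ne (h : MinimalGcdViolation a i j k) {u v : Fin n} (huv : u ≠ v)
    (hu : u < j) (hv : v < j) : a u ⊓ a v ≤ a k ⊓ a j := by
  wlog hlt : u < v generalizing u v
  · simpa only [inf_comm] using this huv.symm hv hu (huv.symm.lt_of_le (not_lt.1 hlt))
  exact le_inf (h.inf_le_of_lt_j u v hlt hv) (h.inf_le_below_k u v j hlt hv h.lt_jk)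

theorem not_add_le_of_lt (h : MinimalGcdViolation a i j k) (hanti : ∀ p q, p ≠ q → ¬a p ≤ a q)
    {u : Fin n} (hu : u < j) : ¬a u + a j ≤ a k + (a i ⊔ a j) := by
  intro hedge
  by_cases hui : u = i
  · subst hui
    obtain ⟨t, ht⟩ := not_forall.1 (mt Finsupp.le_def.2 h.not_inf_le)
    have := hedge t
    simp only [Finsupp.add_apply, Finsupp.sup_apply, Finsupp.inf_apply] at ht this
    omega
  · obtain ⟨s, hs⟩ := not_forall.1 (mt Finsupp.le_def.2 (hanti u k (hu.trans h.lt_jk).ne))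
    have h₁ := hedge s
    have h₂ := h.inf_le_inf_of_ne hui hu h.lt_ij s
    simp only [Finsupp.add_apply, Finsupp.sup_apply, Finsupp.inf_apply] at h₁ h₂
    omega

theorem not_add_le_of_lt_of_gt (h : MinimalGcdViolation a i j k)
    (hanti : ∀ p q, p ≠ q → ¬a p ≤ a q) {c : Fin n} (hjc : j < c) (hck : c < k)
    (hc : a c + a j ≤ a k + (a i ⊔ a j)) {u v : Fin n} (hu : u < j) (hjv : j < v) (hvk : v < k) :
    ¬a u + a v ≤ a k + (a i ⊔ a j) := by
  intro hedge
  by_cases hui : u = i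
  · subst hui
    obtain ⟨t, ht⟩ := not_forall.1 (mt Finsupp.le_def.2 h.not_inf_le)
    have h₁ := hc t
    have h₂ := hedge t
    have h₃ := h.inf_le_below_k u j c hu hjc hck t
    have h₄ := h.inf_le_below_k u j v hu hjv hvk t
    simp only [Finsupp.add_apply, Finsupp.sup_apply, Finsupp.inf_apply] at ht h₁ h₂ h₃ h₄
    omega
  · obtain ⟨s, hs⟩ := not_forall.1 (mt Finsupp.le_def.2 (hanti u k (hu.trans h.lt_jk).ne))
    have h₁ := hc s
    have h₂ := hedge s
    have h₃ := h.inf_le_inf_of_ne hui hu h.lt_ij s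
    have h₄ := h.inf_le_below_k u j v hu hjv hvk s
    have h₅ := h.inf_le_below_k u j c hu hjc hck s
    simp only [Finsupp.add_apply, Finsupp.sup_apply, Finsupp.inf_apply] at h₁ h₂ h₃ h₄ h₅
    omega

theorem exists_separating_finset (h : MinimalGcdViolation a i j k)
    (hanti : ∀ p q, p ≠ q → ¬a p ≤ a q) :
    ∃ s : Finset (Fin n), i ∈ s ∧ j ∉ s ∧
      ∀ u v, u < v → v < k → a u + a v ≤ a k + (a i ⊔ a j) → (u ∈ s ↔ v ∈ s) := by
  -- `j` has no neighbour below it; if it has one above, no edge crosses `j`, else `j` is isolated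
  by_cases hc : ∃ c, j < c ∧ c < k ∧ a c + a j ≤ a k + (a i ⊔ a j)
  · obtain ⟨c, hjc, hck, hc⟩ := hc
    refine ⟨Finset.Iio j, by simpa using h.lt_ij, by simp, fun u v huv hvk hedge => ?_⟩
    simp only [Finset.mem_Iio]
    refine ⟨fun hu => ?_, huv.trans⟩
    by_contra hv
    rcases (not_lt.1 hv).lt_or_eq with hjv | rfl
    · exact h.not_add_le_of_lt_of_gt hanti hjc hck hc hu hjv hvk hedge
    · exact h.not_add_le_of_lt hanti hu hedge
  · push Not at hc
    refine ⟨Finset.univ.erase j, by simpa using h.lt_ij.ne, by simp,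
      fun u v huv hvk hedge => ?_⟩
    have hu : u ≠ j := by
      rintro rfl
      exact hc v huv hvk (add_comm (a u) (a v) ▸ hedge)
    have hv : v ≠ j := by
      rintro rfl
      exact h.not_add_le_of_lt hanti huv hedge
    simp [hu, hv]

end MinimalGcdViolation

end Combinatorics

section Monomial

variable (R : Type*) {σ : Type*} [CommRing R] {n : ℕ} (a : Fin n → σ →₀ ℕ)

noncomputable def pairSyzygy (d : σ →₀ ℕ) (u v : Fin n) : Fin n → MvPolynomial σ R :=
  Pi.single u (monomial (d - a u) 1) - Pi.single v (monomial (d - a v) 1)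

variable {R a}

theorem pairSyzygy_swap (d : σ →₀ ℕ) (u v : Fin n) :
    pairSyzygy R a d v u = -pairSyzygy R a d u v :=
  (neg_sub _ _).symm

theorem sum_pairSyzygy_mul {d : σ →₀ ℕ} {u v : Fin n} (hu : a u ≤ d) (hv : a v ≤ d)
    (s : Finset (Fin n)) :
    ∑ q ∈ s, pairSyzygy R a d u v q * monomial (a q) 1 =
      (if u ∈ s then monomial d 1 else 0) - (if v ∈ s then monomial d 1 else 0) := by
  simp [pairSyzygy, sub_mul, Finset.sum_sub_distrib, Pi.single_apply, ite_mul, monomial_mul,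
    tsub_add_cancel_of_le hu, tsub_add_cancel_of_le hv]

theorem monomial_smul_pairSyzygy_mem {r u v : Fin n} {d : σ →₀ ℕ} (huv : u < v) (hvr : v < r)
    (hu : a u ≤ d) (hv : a v ≤ d) (hgcd : a u ⊓ a v ≤ a r) :
    monomial (a r) (1 : R) • pairSyzygy R a d u v ∈
      koszulBoundaries (fun i => monomial (a i) (1 : R)) r := by
  set e := (a r - a u ⊓ a v) + (d - a u ⊔ a v)
  have hexp : a r + (d - a u) = e + a v ∧ a r + (d - a v) = e + a u := by
    constructor <;>
    · ext s
      have h1 := Finsupp.le_def.1 hgcd s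
      have h2 := Finsupp.le_def.1 hu s
      have h3 := Finsupp.le_def.1 hv s
      simp only [Finsupp.add_apply, Finsupp.tsub_apply, Finsupp.inf_apply,
        Finsupp.sup_apply, e] at *
      omega
  have key : monomial (a r) (1 : R) • pairSyzygy R a d u v =
      monomial e (1 : R) • (Pi.single u (monomial (a v) 1) - Pi.single v (monomial (a u) 1) :
        Fin n → MvPolynomial σ R) := by
    simp only [pairSyzygy, smul_sub, ← Pi.single_smul, smul_eq_mul, monomial_mul, one_mul,
      hexp.1, hexp.2]
  rw [key]
  exact Submodule.smul_mem _ _ (Submodule.subset_span ⟨u, v, huv, hvr, rfl⟩)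

theorem mem_span_pairSyzygy {r : Fin n} {w : Fin n → MvPolynomial σ R}
    (hw : ∀ q, r ≤ q → w q = 0) (hsyz : ∑ q, w q * monomial (a q) 1 = 0) :
    w ∈ Submodule.span (MvPolynomial σ R)
      {x | ∃ d u v, u < r ∧ v < r ∧ a u ≤ d ∧ a v ≤ d ∧ x = pairSyzygy R a d u v} := by
  set P := Submodule.span (MvPolynomial σ R)
    {x | ∃ d u v, u < r ∧ v < r ∧ a u ≤ d ∧ a v ≤ d ∧ x = pairSyzygy R a d u v}
  let lift : (σ →₀ ℕ) → (Fin n → MvPolynomial σ R) := fun d =>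
    if h : ∃ q, q < r ∧ a q ≤ d then Pi.single h.choose (monomial (d - a h.choose) 1) else 0
  let φ := (basisMonomials σ R).constr R lift
  let Ψ := (Fintype.linearCombination (MvPolynomial σ R)
    (fun q => monomial (a q) (1 : R))).restrictScalars R
  -- `φ` splits `Ψ` on every multidegree reached below `r`, so `T` fixes syzygies and sends
  -- each term `c X^b e_q` to `c` times a pair syzygy
  let T := LinearMap.id - φ ∘ₗ Ψ
  have hT_monomial : ∀ q, q < r → ∀ b c, T (Pi.single q (monomial b c)) ∈ P := by
    intro q hq b c
    have h : ∃ q', q' < r ∧ a q' ≤ b + a q := ⟨q, hq, le_add_self⟩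
    have : T (Pi.single q (monomial b c)) = c • pairSyzygy R a (b + a q) q h.choose := by
      have hΨ : Ψ (Pi.single q (monomial b c)) = c • monomial (b + a q) 1 := by
        simp [Ψ, Fintype.linearCombination_apply, Pi.single_apply, monomial_mul, smul_monomial]
      have hφ : φ (monomial (b + a q) 1) = lift (b + a q) := by
        simpa using (basisMonomials σ R).constr_basis R lift (b + a q)
      simp only [T, LinearMap.sub_apply, LinearMap.id_apply, LinearMap.comp_apply, hΨ, map_smul,
        hφ]
      simp only [lift, dif_pos h, pairSyzygy, smul_sub, ← Pi.single_smul, smul_monomial,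
        smul_eq_mul, mul_one, add_tsub_cancel_right]
    rw [this]
    exact P.smul_of_tower_mem c (Submodule.subset_span ⟨_, q, _, hq, h.choose_spec.1, le_add_self,
      h.choose_spec.2, rfl⟩)
  have hTw : T w ∈ P := by
    rw [← Finset.univ_sum_single w, map_sum]
    refine P.sum_mem fun q _ => ?_
    rcases lt_or_ge q r with hq | hq
    · induction w q using MvPolynomial.induction_on' with
      | monomial b c => exact hT_monomial q hq b c
      | add p₁ p₂ h₁ h₂ => simpa only [Pi.single_add, map_add] using P.add_mem h₁ h₂
    · simp [hw q hq]
  have hΨw : Ψ w = 0 := by simpa [Ψ, Fintype.linearCombination_apply] using hsyz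
  simpa [T, hΨw] using hTw

theorem isProperSequence_of_inf_le (hgcd : ∀ i j k : Fin n, i < j → j < k → a i ⊓ a j ≤ a k) :
    IsProperSequence (fun i => monomial (a i) (1 : R)) := by
  rw [isProperSequence_iff]
  intro r w hw hsyz
  have hspan := mem_span_pairSyzygy (R := R) hw hsyz
  clear hw hsyz
  induction hspan using Submodule.span_induction with
  | mem x hx =>
    obtain ⟨d, u, v, hu, hv, hud, hvd, rfl⟩ := hx
    rcases lt_trichotomy u v with huv | rfl | hvu
    · exact monomial_smul_pairSyzygy_mem huv hv hud hvd (hgcd u v r huv hv)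
    · simp [pairSyzygy]
    · rw [← neg_neg (pairSyzygy R a d u v), ← pairSyzygy_swap, smul_neg]
      exact neg_mem (monomial_smul_pairSyzygy_mem hvu hu hvd hud (hgcd v u r hvu hu))
  | zero => simp
  | add x y _ _ hx hy => simpa only [smul_add] using add_mem hx hy
  | smul p x _ hx => simpa only [smul_comm _ p] using Submodule.smul_mem _ p hx

theorem coeff_sum_mul_monomial_eq_zero_of_mem_koszulBoundaries {r : Fin n} {d : σ →₀ ℕ}
    {s : Finset (Fin n)} (hs : ∀ u v, u < v → v < r → a u + a v ≤ d → (u ∈ s ↔ v ∈ s))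
    {x : Fin n → MvPolynomial σ R}
    (hx : x ∈ koszulBoundaries (fun i => monomial (a i) (1 : R)) r) :
    coeff d (∑ q ∈ s, x q * monomial (a q) 1) = 0 := by
  set J : Ideal (MvPolynomial σ R) := Ideal.span ((fun e => monomial e 1) '' {e | ¬e ≤ d})
  have hJ : ∑ q ∈ s, x q * monomial (a q) 1 ∈ J := by
    induction hx using Submodule.span_induction with
    | mem y hy =>
      obtain ⟨u, v, huv, hvr, rfl⟩ := hy
      have hgen : monomial (a u + a v) (1 : R) ∈ J ∨ (u ∈ s ↔ v ∈ s) := by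
        by_cases h : a u + a v ≤ d
        · exact Or.inr (hs u v huv hvr h)
        · exact Or.inl (Ideal.subset_span ⟨_, h, rfl⟩)
      simp only [Pi.sub_apply, sub_mul, Finset.sum_sub_distrib, Pi.single_apply, ite_mul,
        zero_mul, Finset.sum_ite_eq', monomial_mul, one_mul, add_comm (a v)]
      rcases hgen with hJ | hiff
      · split_ifs <;> simp [hJ, J.neg_mem_iff]
      · simp [hiff]
    | zero => simp
    | add y z _ _ hy hz =>
      simpa only [Pi.add_apply, add_mul, Finset.sum_add_distrib] using J.add_mem hy hz
    | smul p y _ hy =>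
      simpa only [Pi.smul_apply, smul_eq_mul, mul_assoc, ← Finset.mul_sum] using J.mul_mem_left p hy
  by_contra h
  obtain ⟨e, he, hle⟩ := mem_ideal_span_monomial_image.1 hJ d (mem_support_iff.2 h)
  exact he hle

theorem inf_le_of_isProperSequence [Nontrivial R] (hanti : ∀ p q, p ≠ q → ¬a p ≤ a q)
    (hP : IsProperSequence (fun i => monomial (a i) (1 : R))) :
    ∀ i j k : Fin n, i < j → j < k → a i ⊓ a j ≤ a k := by
  classical
  by_contra hviol
  obtain ⟨i, j, k, h⟩ := exists_minimalGcdViolation hviol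
  obtain ⟨s, his, hjs, hsep⟩ := h.exists_separating_finset hanti
  have hcycle : ∑ q, pairSyzygy R a (a i ⊔ a j) i j q * monomial (a q) 1 = 0 := by
    simp [sum_pairSyzygy_mul le_sup_left le_sup_right]
  have hsupp : ∀ q, k ≤ q → pairSyzygy R a (a i ⊔ a j) i j q = 0 := fun q hq => by
    simp [pairSyzygy, ((h.lt_ij.trans h.lt_jk).trans_le hq).ne',
      (h.lt_jk.trans_le hq).ne']
  have hzero := coeff_sum_mul_monomial_eq_zero_of_mem_koszulBoundaries hsep
    ((isProperSequence_iff _).1 hP k _ hsupp hcycle)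
  simp [mul_assoc, ← Finset.mul_sum, sum_pairSyzygy_mul le_sup_left le_sup_right, his, hjs,
    monomial_mul] at hzero

theorem isProperSequence_monomial_iff [Nontrivial R] (hanti : ∀ p q, p ≠ q → ¬a p ≤ a q) :
    IsProperSequence (fun i => monomial (a i) (1 : R)) ↔
      ∀ i j k : Fin n, i < j → j < k → a i ⊓ a j ≤ a k :=
  ⟨inf_le_of_isProperSequence hanti, isProperSequence_of_inf_le⟩

end Monomial

/-- A minimal monomial sequence `f_1,…,f_n` in `K[x_1,…,x_m]` is a proper
sequence iff `gcd(f_i,f_j) ∣ f_k` for all `i < j < k`. -/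
theorem stmt_7 {K : Type*} [Field K] {m n : ℕ} (a : Fin n → (Fin m →₀ ℕ))
    (f : Fin n → MvPolynomial (Fin m) K) (hf : ∀ i, f i = monomial (a i) 1)
    (hmin : ∀ i j : Fin n, i ≠ j → ¬f i ∣ f j) :
    IsProperSequence f ↔
      ∀ i j k : Fin n, i < j → j < k →
        (monomial (a i ⊓ a j) (1 : K)) ∣ monomial (a k) 1 := by
  obtain rfl : f = fun i => monomial (a i) 1 := funext hf
  have hanti : ∀ p q, p ≠ q → ¬a p ≤ a q := fun p q hpq hle =>
    hmin p q hpq (monomial_dvd_monomial.2 ⟨Or.inr hle, dvd_rfl⟩)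
  simpa [monomial_dvd_monomial] using isProperSequence_monomial_iff hanti
end

section
/- Let f_1,...,f_n be monomials with gcd(f_i,f_j) ∣ f_k for all i<j<k. Then for every 2 ≤ r ≤ n-1 and all i < j ≤ r, the syzygy f_{r+1}(f_{ij} e_j − f_{ji} e_i) lies in the submodule of R^r generated by the Koszul boundaries f_j e_i − f_i e_j (i < j ≤ r). -/
open MvPolynomial

/-- Let `f_0,…,f_{n-1}` be monomials with `gcd(f_i,f_j) ∣ f_k` for `i < j < k`.
Then for every `r` and all `i < j < r`, the syzygy
`f_r·(f_{ij} e_j − f_{ji} e_i)` (with `f_{uv} = f_u/gcd(f_u,f_v)`) lies in the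
submodule generated by the Koszul boundaries `f_v e_u − f_u e_v`
(`u < v < r`). -/
theorem stmt_8 {K : Type*} [Field K] {m n : ℕ} (a : Fin n → (Fin m →₀ ℕ))
    (f : Fin n → MvPolynomial (Fin m) K) (hf : ∀ i, f i = monomial (a i) 1)
    (h : ∀ i j k : Fin n, i < j → j < k →
      (monomial (a i ⊓ a j) (1 : K)) ∣ monomial (a k) 1) :
    ∀ r i j : Fin n, i < j → j < r →
      (f r • (Pi.single j ((monomial (a i - a i ⊓ a j) (1 : K) : MvPolynomial (Fin m) K))
          - Pi.single i (monomial (a j - a j ⊓ a i) 1)))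
        ∈ Submodule.span (MvPolynomial (Fin m) K)
          {w : Fin n → MvPolynomial (Fin m) K | ∃ u v : Fin n, u < v ∧ v < r ∧
            w = Pi.single u (f v) - Pi.single v (f u)} := by
  intro r i j hij hjr
  have hmem : (Pi.single i (f j) - Pi.single j (f i) : Fin n → MvPolynomial (Fin m) K)
      ∈ {w : Fin n → MvPolynomial (Fin m) K | ∃ u v : Fin n, u < v ∧ v < r ∧
            w = Pi.single u (f v) - Pi.single v (f u)} := ⟨i, j, hij, hjr, rfl⟩
  have hle : a i ⊓ a j ≤ a r := monomial_one_dvd_monomial_one.mp (h i j r hij hjr)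
  have key : (f r • (Pi.single j ((monomial (a i - a i ⊓ a j) (1 : K) :
        MvPolynomial (Fin m) K)) - Pi.single i (monomial (a j - a j ⊓ a i) 1)))
      = (-(monomial (a r - a i ⊓ a j) (1 : K))) •
        (Pi.single i (f j) - Pi.single j (f i) : Fin n → MvPolynomial (Fin m) K) := by
    funext t
    simp only [Pi.smul_apply, Pi.sub_apply, smul_eq_mul, hf, neg_mul, mul_sub]
    have e1 : a r + (a i - a i ⊓ a j) = a r - a i ⊓ a j + a i :=
      ((add_tsub_assoc_of_le inf_le_left _).symm).trans (tsub_add_eq_add_tsub hle).symm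
    have e2 : a r + (a j - a j ⊓ a i) = a r - a i ⊓ a j + a j := by
      rw [inf_comm (a j)]
      exact ((add_tsub_assoc_of_le inf_le_right _).symm).trans
        (tsub_add_eq_add_tsub hle).symm
    rcases eq_or_ne t i with rfl | hti
    · simp only [Pi.single_eq_same, Pi.single_eq_of_ne hij.ne]
      simp only [mul_zero, zero_sub, monomial_mul, one_mul, neg_zero, sub_zero]
      rw [e2]
    · rcases eq_or_ne t j with rfl | htj
      · simp only [Pi.single_eq_same, Pi.single_eq_of_ne hij.ne']
        simp only [mul_zero, sub_zero, monomial_mul, one_mul, neg_zero, zero_sub,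
          neg_neg]
        rw [e1]
      · simp only [Pi.single_eq_of_ne hti, Pi.single_eq_of_ne htj]
        ring
  rw [key]
  exact Submodule.smul_mem _ _ (Submodule.subset_span hmem)
end

section
/- Let f_1, f_2, f_3 be squarefree monomials with no f_i dividing f_j for i ≠ j. If the colon ideal (f_1) : f_2 is contained in (f_1, f_2) : f_3, then gcd(f_1, f_2) divides f_3. -/
open MvPolynomial

/-- Let `f_1, f_2, f_3` be squarefree monomials with no `f_i` dividing `f_j`
for `i ≠ j`. If `(f_1) : f_2 ⊆ (f_1, f_2) : f_3` then `gcd(f_1,f_2) ∣ f_3`. -/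
theorem stmt_12 {K : Type*} [Field K] {m : ℕ} (a₁ a₂ a₃ : Fin m →₀ ℕ)
    (h₁ : ∀ t, a₁ t ≤ 1) (h₂ : ∀ t, a₂ t ≤ 1) (h₃ : ∀ t, a₃ t ≤ 1)
    (h₁₂ : ¬(monomial a₁ (1 : K) : MvPolynomial (Fin m) K) ∣ monomial a₂ 1)
    (h₂₁ : ¬(monomial a₂ (1 : K) : MvPolynomial (Fin m) K) ∣ monomial a₁ 1)
    (h₁₃ : ¬(monomial a₁ (1 : K) : MvPolynomial (Fin m) K) ∣ monomial a₃ 1)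
    (h₃₁ : ¬(monomial a₃ (1 : K) : MvPolynomial (Fin m) K) ∣ monomial a₁ 1)
    (h₂₃ : ¬(monomial a₂ (1 : K) : MvPolynomial (Fin m) K) ∣ monomial a₃ 1)
    (h₃₂ : ¬(monomial a₃ (1 : K) : MvPolynomial (Fin m) K) ∣ monomial a₂ 1)
    (hcolon :
      (Ideal.span {(monomial a₁ (1 : K) : MvPolynomial (Fin m) K)}).colon
          (Ideal.span {(monomial a₂ (1 : K) : MvPolynomial (Fin m) K)} : Set (MvPolynomial (Fin m) K)) ≤
        (Ideal.span {(monomial a₁ (1 : K) : MvPolynomial (Fin m) K),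
            monomial a₂ 1}).colon (Ideal.span {(monomial a₃ (1 : K) : MvPolynomial (Fin m) K)} : Set (MvPolynomial (Fin m) K))) :
    (monomial (a₁ ⊓ a₂) (1 : K)) ∣ monomial a₃ 1 := by
  set g : Fin m →₀ ℕ := a₁ - a₁ ⊓ a₂ with hg
  have hmem : (monomial g (1 : K) : MvPolynomial (Fin m) K) ∈
      (Ideal.span {(monomial a₁ (1 : K) : MvPolynomial (Fin m) K)}).colon
        (Ideal.span {(monomial a₂ (1 : K) : MvPolynomial (Fin m) K)} : Set (MvPolynomial (Fin m) K)) := by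
    rw [Ideal.mem_colon_span_singleton, monomial_mul, mul_one, Ideal.mem_span_singleton,
      monomial_dvd_monomial]
    refine ⟨Or.inr ?_, dvd_refl _⟩
    intro t
    simp only [Finsupp.add_apply, hg, Finsupp.tsub_apply, Finsupp.inf_apply]
    omega
  have hmem2 := hcolon hmem
  rw [Ideal.mem_colon_span_singleton, monomial_mul, mul_one] at hmem2
  have hset : ({(monomial a₁ (1 : K) : MvPolynomial (Fin m) K), monomial a₂ 1} :
      Set (MvPolynomial (Fin m) K)) =
      (fun s => monomial s (1 : K)) '' {a₁, a₂} := by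
    simp [Set.image_insert_eq]
  rw [hset, mem_ideal_span_monomial_image] at hmem2
  obtain ⟨si, hsi, hle⟩ := hmem2 (g + a₃) (by
    rw [mem_support_iff, coeff_monomial, if_pos rfl]; exact one_ne_zero)
  rw [monomial_dvd_monomial]
  refine ⟨Or.inr ?_, dvd_refl _⟩
  intro t
  have hle' := hle t
  simp only [Finsupp.add_apply, hg, Finsupp.tsub_apply, Finsupp.inf_apply] at hle' ⊢
  rcases hsi with rfl | rfl
  · have := h₁ t; have := h₂ t; omega
  · have := h₁ t; have := h₂ t; omega
end

section
/- Let f_1, ..., f_n be a squarefree minimal monomial sequence. If the colon ideals I_i = (f_1,...,f_{i-1}) : f_i satisfy I_2 ⊆ I_3 ⊆ ... ⊆ I_n, then gcd(f_i, f_j) divides f_k for all i < j < k. -/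
open MvPolynomial

/-- Combinatorial core: `A p t` means variable `t` occurs in the `p`-th monomial. -/
lemma stmt_13_combinat {n m : ℕ} (A : Fin n → Fin m → Prop)
    (hanti : ∀ p q : Fin n, p ≠ q → ∃ t, A p t ∧ ¬ A q t)
    (hC : ∀ p j k : Fin n, p < j → j ≤ k →
      ∃ l, l < k ∧ ∀ t, A l t → ¬ A k t → A p t ∧ ¬ A j t) :
    ∀ i j k : Fin n, i < j → j < k → ∀ t, A i t → A j t → A k t := by
  have B : ∀ u v w : Fin n, u < v → v < w → (∀ t, A u t → A v t ∨ A w t) → False := by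
    intro u v w huv hvw hsub
    obtain ⟨l, hlw, hl⟩ := hC u v w huv hvw.le
    obtain ⟨t, hAl, hnAw⟩ := hanti l w (ne_of_lt hlw)
    obtain ⟨hAu, hnAv⟩ := hl t hAl hnAw
    rcases hsub t hAu with h | h
    · exact hnAv h
    · exact hnAw h
  have main : ∀ N : ℕ, ∀ k : Fin n, (k : ℕ) < N →
      ∀ i j : Fin n, i < j → j < k → ∀ t, A i t → A j t → A k t := by
    intro N
    induction N with
    | zero => intro k hk; omega
    | succ N ih =>
      intro k hk
      have Psmall : ∀ w : Fin n, w < k →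
          ∀ i j : Fin n, i < j → j < w → ∀ t, A i t → A j t → A w t := by
        intro w hw
        have hw' : (w : ℕ) < (k : ℕ) := hw
        exact ih w (by omega)
      have Qk : ∀ x l : Fin n, x < l → l < k → (∀ t, A l t → A x t ∨ A k t) → False := by
        intro x l hxl hlk hsub
        obtain ⟨q, hqk, hq⟩ := hC x l k hxl hlk.le
        rcases lt_trichotomy q l with hql | rfl | hlq
        · by_cases hqx : q = x
          · subst hqx
            obtain ⟨t, hAl, hnAk⟩ := hanti l k (ne_of_lt hlk)
            rcases hsub t hAl with hAx | hAk
            · exact (hq t hAx hnAk).2 hAl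
            · exact hnAk hAk
          · obtain ⟨t, hAq, hnAk⟩ := hanti q k (ne_of_lt hqk)
            obtain ⟨hAx, hnAl⟩ := hq t hAq hnAk
            rcases lt_or_gt_of_ne hqx with h | h
            · exact hnAl (Psmall l hlk q x h hxl t hAq hAx)
            · exact hnAl (Psmall l hlk x q h hql t hAx hAq)
        · obtain ⟨t, hAl, hnAk⟩ := hanti q k (ne_of_lt hlk)
          exact (hq t hAl hnAk).2 hAl
        · refine B l q k hlq hqk ?_
          intro t hAl
          by_cases hk' : A k t
          · exact Or.inr hk'
          · rcases hsub t hAl with hAx | hAk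
            · exact Or.inl (Psmall q hqk x l hxl hlq t hAx hAl)
            · exact absurd hAk hk'
      intro i j hij hjk t0 hAi hAj
      by_contra hnAk
      obtain ⟨l, hlk, hl⟩ := hC i j k hij hjk.le
      have hli : l ≠ i := by
        rintro rfl
        exact (hl t0 hAi hnAk).2 hAj
      have hsub : ∀ t, A l t → A i t ∨ A k t := by
        intro t hAl
        by_cases h : A k t
        · exact Or.inr h
        · exact Or.inl (hl t hAl h).1
      rcases lt_or_gt_of_ne hli with h | h
      · exact B l i k h (hij.trans hjk) hsub
      · exact Qk i l h hlk hsub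
  intro i j k hij hjk
  exact main ((k : ℕ) + 1) k (Nat.lt_succ_self _) i j hij hjk

/-- Let `f_1,…,f_n` be a squarefree minimal monomial sequence. If the colon
ideals `I_i = (f_1,…,f_{i-1}) : f_i` form an increasing chain, then
`gcd(f_i,f_j) ∣ f_k` for all `i < j < k`. -/
theorem stmt_13 {K : Type*} [Field K] {m n : ℕ} (a : Fin n → (Fin m →₀ ℕ))
    (f : Fin n → MvPolynomial (Fin m) K) (hf : ∀ i, f i = monomial (a i) 1)
    (hsq : ∀ i t, a i t ≤ 1)
    (hmin : ∀ i j : Fin n, i ≠ j → ¬f i ∣ f j)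
    (I : Fin n → Ideal (MvPolynomial (Fin m) K))
    (hI : ∀ i, I i = (Ideal.span (f '' {j | j < i})).colon (Ideal.span {f i}))
    (hchain : ∀ i j : Fin n, i ≤ j → I i ≤ I j) :
    ∀ i j k : Fin n, i < j → j < k →
      (monomial (a i ⊓ a j) (1 : K)) ∣ monomial (a k) 1 := by
  classical
  -- the occurrence predicate
  set A : Fin n → Fin m → Prop := fun p t => a p t ≠ 0 with hA
  -- antichain condition
  have hanti : ∀ p q : Fin n, p ≠ q → ∃ t, A p t ∧ ¬ A q t := by
    intro p q hpq
    have hnd := hmin p q hpq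
    have hnle : ¬ a p ≤ a q := by
      intro hle
      refine hnd ⟨monomial (a q - a p) 1, ?_⟩
      rw [hf p, hf q, monomial_mul, add_tsub_cancel_of_le hle, one_mul]
    rw [Finsupp.le_def] at hnle
    push_neg at hnle
    obtain ⟨t, ht⟩ := hnle
    have h1 := hsq p t
    have h2 := hsq q t
    refine ⟨t, ?_, ?_⟩ <;> simp only [hA] <;> omega
  -- colon-chain condition
  have hC : ∀ p j k : Fin n, p < j → j ≤ k →
      ∃ l, l < k ∧ ∀ t, A l t → ¬ A k t → A p t ∧ ¬ A j t := by
    intro p j k hpj hjk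
    set u : Fin m →₀ ℕ := a p - a p ⊓ a j with hu
    have hmem_j : (monomial u (1 : K)) ∈ I j := by
      rw [hI j, Ideal.mem_colon_span_singleton, hf j, monomial_mul, one_mul]
      have hple : a p ≤ u + a j := by
        rw [Finsupp.le_def]
        intro t
        simp only [hu, Finsupp.add_apply, Finsupp.tsub_apply, Finsupp.inf_apply]
        have h1 : a p t ⊓ a j t ≤ a p t := inf_le_left
        have h2 : a p t ⊓ a j t ≤ a j t := inf_le_right
        omega
      have heq : monomial (u + a j) (1 : K) = f p * monomial ((u + a j) - a p) 1 := by
        rw [hf p, monomial_mul, one_mul, add_tsub_cancel_of_le hple]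
      rw [heq]
      exact Ideal.mul_mem_right _ _ (Ideal.subset_span ⟨p, hpj, rfl⟩)
    have hmem_k := hchain j k hjk hmem_j
    rw [hI k, Ideal.mem_colon_span_singleton, hf k, monomial_mul, one_mul] at hmem_k
    have himg : f '' {l | l < k} = (fun s => monomial s (1 : K)) '' (a '' {l | l < k}) := by
      rw [Set.image_image]
      exact Set.image_congr fun x _ => hf x
    rw [himg, mem_ideal_span_monomial_image] at hmem_k
    have hsup : u + a k ∈ (monomial (u + a k) (1 : K)).support := by
      rw [support_monomial]
      simp
    obtain ⟨si, ⟨l, hlk, rfl⟩, hle⟩ := hmem_k _ hsup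
    refine ⟨l, hlk, ?_⟩
    intro t hlt hkt
    simp only [hA, not_not] at hlt hkt
    have h := Finsupp.le_def.mp hle t
    simp only [hu, Finsupp.add_apply, Finsupp.tsub_apply, Finsupp.inf_apply] at h
    have h1 := hsq p t
    have h2 := hsq j t
    have h3 : a p t ⊓ a j t ≤ a j t := inf_le_right
    simp only [hA]
    rcases le_total (a p t) (a j t) with hc | hc
    · rw [inf_eq_left.mpr hc] at h
      omega
    · rw [inf_eq_right.mpr hc] at h
      omega
  have key := stmt_13_combinat A hanti hC
  intro i j k hij hjk
  have hle : a i ⊓ a j ≤ a k := by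
    rw [Finsupp.le_def]
    intro t
    rw [Finsupp.inf_apply]
    by_cases h1 : a i t = 0
    · calc a i t ⊓ a j t ≤ a i t := inf_le_left
        _ ≤ a k t := by omega
    · by_cases h2 : a j t = 0
      · calc a i t ⊓ a j t ≤ a j t := inf_le_right
          _ ≤ a k t := by omega
      · have hk := key i j k hij hjk t h1 h2
        simp only [hA] at hk
        have h3 := hsq i t
        have h4 : a i t ⊓ a j t ≤ a i t := inf_le_left
        omega
  refine ⟨monomial (a k - a i ⊓ a j) 1, ?_⟩
  rw [monomial_mul, add_tsub_cancel_of_le hle, one_mul]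
end
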